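/- arXiv:2506.00395 — 6 statements merged into one kernel-verified Lean document; each statement's English description precedes it below -/
import Mathlib

section
/- Let A be an associative algebra over a field and e(u) = Σ_{r≥1} e^{(r)} u^{-r} a series with coefficients in A satisfying (u-v)[e(u), e(v)] = c (e(v) - e(u))^2 for a scalar c. Then for every m ≥ 0, (u-v)[e(u), (e(v)-e(u))^m] = c·m·(e(v)-e(u))^{m+1} in A[[u^{-1}, v^{-1}]]. -/
/-!
Laurent convention: `(u - v) * S = T` is encoded as
`(v⁻¹ - u⁻¹) * S = u⁻¹ * v⁻¹ * T` in `MvPowerSeries (Fin 2) A`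
(variable `0` is `u⁻¹`, variable `1` is `v⁻¹`).

`[e(u), ·]` is a derivation, so with `E = e(v) - e(u)` the series
`(u - v)[e(u), E^m]` is a sum of `m` terms `E^i (u - v)[e(u), E] E^{m-1-i}`, since
`u - v` is central. As `[e(u), E] = [e(u), e(v)]`, each term equals `c E^{m+1}`.
-/

noncomputable section

/-- The series `Σ_{r} f^{(r)} u^{-r}` viewed in `A[[u⁻¹, v⁻¹]]`, where the first
power-series variable (index `0`) plays the role of `u⁻¹` and the second
(index `1`) the role of `v⁻¹`. -/
def Useries {A : Type*} [Ring A] (f : ℕ → A) : MvPowerSeries (Fin 2) A :=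
  fun d => if d 1 = 0 then f (d 0) else 0

/-- The series `Σ_{r} f^{(r)} v^{-r}` viewed in `A[[u⁻¹, v⁻¹]]`. -/
def Vseries {A : Type*} [Ring A] (f : ℕ → A) : MvPowerSeries (Fin 2) A :=
  fun d => if d 0 = 0 then f (d 1) else 0

/-- `u⁻¹` as an element of `A[[u⁻¹, v⁻¹]]`. -/
def Xu {A : Type*} [Ring A] : MvPowerSeries (Fin 2) A := MvPowerSeries.X 0

/-- `v⁻¹` as an element of `A[[u⁻¹, v⁻¹]]`. -/
def Xv {A : Type*} [Ring A] : MvPowerSeries (Fin 2) A := MvPowerSeries.X 1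

theorem Ring.lie_mul_right {R : Type*} [Ring R] (a b d : R) :
    ⁅a, b * d⁆ = ⁅a, b⁆ * d + b * ⁅a, d⁆ := by
  simp only [Ring.lie_def]
  noncomm_ring

theorem mul_lie_pow_of_mul_lie {k R : Type*} [CommSemiring k] [Ring R] [Algebra k R]
    {z w a x : R} {c : k} (hz : Commute z x) (hw : Commute w x)
    (h : z * ⁅a, x⁆ = c • (w * x ^ 2)) (m : ℕ) :
    z * ⁅a, x ^ m⁆ = (c * m) • (w * x ^ (m + 1)) := by
  induction m with
  | zero => simp [Ring.lie_def]
  | succ n ih =>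
    calc z * ⁅a, x ^ (n + 1)⁆
        = z * ⁅a, x⁆ * x ^ n + x * (z * ⁅a, x ^ n⁆) := by
          rw [pow_succ', Ring.lie_mul_right, mul_add, ← mul_assoc, ← mul_assoc, hz.eq,
            mul_assoc x]
      _ = c • (w * x ^ (n + 2)) + (c * n) • (w * x ^ (n + 2)) := by
          rw [h, ih, smul_mul_assoc, mul_smul_comm, mul_assoc, ← pow_add, ← mul_assoc,
            ← hw.eq, mul_assoc, ← pow_succ', add_comm 2 n]
      _ = (c * (n + 1 : ℕ)) • (w * x ^ (n + 1 + 1)) := by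
          rw [← add_smul]
          push_cast
          ring_nf

theorem stmt8_general {k A : Type*} [Field k] [Ring A] [Algebra k A]
    (c : k) (e : ℕ → A)
    (hee : (Xv - Xu) * ⁅Useries e, Vseries e⁆ =
      c • (Xu * Xv * (Vseries e - Useries e) ^ 2))
    (m : ℕ) :
    (Xv - Xu) * ⁅Useries e, (Vseries e - Useries e) ^ m⁆ =
      (c * (m : k)) • (Xu * Xv * (Vseries e - Useries e) ^ (m + 1)) := by
  have hXu : ∀ f : MvPowerSeries (Fin 2) A, Commute Xu f :=
    fun f => (MvPowerSeries.commute_X f 0).symm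
  have hXv : ∀ f : MvPowerSeries (Fin 2) A, Commute Xv f :=
    fun f => (MvPowerSeries.commute_X f 1).symm
  have hlie : ⁅Useries e, Vseries e - Useries e⁆ = ⁅Useries e, Vseries e⁆ := by
    simp [Ring.lie_def, mul_sub, sub_mul]
  refine mul_lie_pow_of_mul_lie ((hXv _).sub_left (hXu _)) ((hXu _).mul_left (hXv _)) ?_ m
  rwa [hlie]

theorem stmt8 {k A : Type*} [Field k] [Ring A] [Algebra k A]
    (c : k) (e : ℕ → A) (he0 : e 0 = 0)
    (hee : (Xv - Xu) * ⁅Useries e, Vseries e⁆ =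
      c • (Xu * Xv * (Vseries e - Useries e) ^ 2))
    (m : ℕ) :
    (Xv - Xu) * ⁅Useries e, (Vseries e - Useries e) ^ m⁆ =
      (c * (m : k)) • (Xu * Xv * (Vseries e - Useries e) ^ (m + 1)) :=
  stmt8_general c e hee m
end
end

section
/- Let A be an associative algebra over a field of characteristic p > 2, and let e(u) = Σ_{r≥1} e^{(r)} u^{-r} satisfy (u-v)[e(u), e(v)] = c(e(v)-e(u))^2 with c ∈ {1, 1/2}. Then (ad e(u))^p (e(v)) = 0, i.e. (u-v)^p (ad e(u))^p(e(v)) = p! c^p (e(v)-e(u))^{p+1} = 0 in A[[u^{-1},v^{-1}]]. -/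
/-!
Put `w = v⁻¹ - u⁻¹` and `z = u⁻¹ v⁻¹`; both are central in `A[[u⁻¹, v⁻¹]]` and `w` is a
non-zero-divisor, so the relation reads `w [e(u), e(v)] = c z s²` with `s = e(v) - e(u)`.
Bracketing it with `s` gives `w [s, [e(u), e(v)]] = c z [s, s²] = 0`, so `s` commutes with
`[e(u), e(v)] = [e(u), s]`, and `ad e(u)` acts on powers of `s` like `d/ds`:
`w [e(u), s^(n+1)] = (n+1) c z s^(n+2)`. Induction gives
`w^n (ad e(u))^n e(v) = n! cⁿ zⁿ s^(n+1)`, which vanishes for `n = p`; cancel `w^p`.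
-/

noncomputable section

namespace MvPowerSeries

variable {σ R : Type*} [Ring R]

theorem coeff_add_single_X_mul (s : σ) (φ : MvPowerSeries σ R) (m : σ →₀ ℕ) :
    coeff (m + Finsupp.single s 1) (X s * φ) = coeff m φ := by
  rw [X_def, add_comm, coeff_add_monomial_mul, one_mul]

theorem coeff_X_mul_of_apply_eq_zero {s : σ} {m : σ →₀ ℕ} (hm : m s = 0)
    (φ : MvPowerSeries σ R) : coeff m (X s * φ) = 0 := by
  rw [X_def, coeff_monomial_mul, if_neg]
  simp [Finsupp.single_le_iff, hm]

theorem isLeftRegular_X_sub_X {i j : σ} (hij : i ≠ j) :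
    IsLeftRegular (X i - X j : MvPowerSeries σ R) := by
  refine isLeftRegular_iff_right_eq_zero_of_mul.2 fun φ h ↦ ?_
  have hX : X i * φ = X j * φ := sub_eq_zero.1 (by rwa [← sub_mul])
  -- the coefficient at `m` reappears in `X j * φ` at a monomial of smaller `j`-degree
  have key : ∀ N (m : σ →₀ ℕ), m j = N → coeff m φ = 0 := by
    intro N
    induction N with
    | zero =>
      intro m hm
      rw [← coeff_add_single_X_mul i, hX, coeff_X_mul_of_apply_eq_zero]
      simp [hm, hij.symm]
    | succ N ih =>
      intro m hm
      obtain ⟨n, rfl⟩ : ∃ n, m = n + Finsupp.single j 1 :=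
        ⟨m - Finsupp.single j 1, (tsub_add_cancel_of_le (by simp [hm])).symm⟩
      rw [← coeff_add_single_X_mul i, hX, add_right_comm, coeff_add_single_X_mul]
      exact ih _ (by simpa [hij.symm] using hm)
  ext m
  exact key _ m rfl

end MvPowerSeries

section

variable {R : Type*} [Ring R]

theorem Ring.lie_mul (x a b : R) : ⁅x, a * b⁆ = ⁅x, a⁆ * b + a * ⁅x, b⁆ := by
  simp only [Ring.lie_def]
  noncomm_ring

theorem Ring.lie_smul {k : Type*} [CommRing k] [Algebra k R] (c : k) (x y : R) :
    ⁅x, c • y⁆ = c • ⁅x, y⁆ := by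
  rw [Ring.lie_def, Ring.lie_def, mul_smul_comm, smul_mul_assoc, smul_sub]

theorem Commute.lie_mul_left {g x : R} (h : Commute g x) (y : R) :
    ⁅x, g * y⁆ = g * ⁅x, y⁆ := by
  rw [Ring.lie_mul, h.symm.lie_eq, zero_mul, zero_add]

theorem lie_pow_succ_of_commute_lie {u s : R} (h : Commute s ⁅u, s⁆) (n : ℕ) :
    ⁅u, s ^ (n + 1)⁆ = (n + 1) • (s ^ n * ⁅u, s⁆) := by
  induction n with
  | zero => simp
  | succ n ih =>
    rw [pow_succ', Ring.lie_mul, ih, mul_smul_comm, ← mul_assoc, ← pow_succ',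
      ← (h.pow_left (n + 1)).eq, succ_nsmul' _ (n + 1)]

end

section

variable {k R : Type*} [CommRing k] [Ring R] [Algebra k R] {w z u v : R} {c : k}

theorem commute_sub_lie_of_mul_lie_eq (hw : IsLeftRegular w) (hwc : ∀ x, Commute w x)
    (hzc : ∀ x, Commute z x) (h : w * ⁅u, v⁆ = c • (z * (v - u) ^ 2)) :
    Commute (v - u) ⁅u, v⁆ := by
  refine commute_iff_lie_eq.2 (isLeftRegular_iff_right_eq_zero_of_mul.1 hw _ ?_)
  have hcomm : Commute (v - u) (z * (v - u) ^ 2) :=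
    (hzc _).symm.mul_right ((Commute.refl _).pow_right 2)
  rw [← (hwc _).lie_mul_left, h, Ring.lie_smul, hcomm.lie_eq, smul_zero]

theorem mul_lie_pow_succ_of_mul_lie_eq (hw : IsLeftRegular w) (hwc : ∀ x, Commute w x)
    (hzc : ∀ x, Commute z x) (h : w * ⁅u, v⁆ = c • (z * (v - u) ^ 2)) (n : ℕ) :
    w * ⁅u, (v - u) ^ (n + 1)⁆ = ((n + 1 : k) * c) • (z * (v - u) ^ (n + 2)) := by
  have hus : ⁅u, v - u⁆ = ⁅u, v⁆ := by rw [Ring.lie_def, Ring.lie_def]; noncomm_ring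
  rw [lie_pow_succ_of_commute_lie (hus ▸ commute_sub_lie_of_mul_lie_eq hw hwc hzc h), hus,
    mul_smul_comm, ← mul_assoc, (hwc _).eq, mul_assoc, h, mul_smul_comm, ← mul_assoc,
    ← (hzc _).eq, mul_assoc, ← pow_add, mul_smul, ← Nat.cast_smul_eq_nsmul k]
  norm_cast

theorem mul_iterate_lie_eq (hw : IsLeftRegular w) (hwc : ∀ x, Commute w x)
    (hzc : ∀ x, Commute z x) (h : w * ⁅u, v⁆ = c • (z * (v - u) ^ 2)) (n : ℕ) :
    w ^ (n + 1) * (fun x ↦ ⁅u, x⁆)^[n + 1] v =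
      ((n + 1).factorial * c ^ (n + 1) : k) • (z ^ (n + 1) * (v - u) ^ (n + 2)) := by
  induction n with
  | zero => simpa using h
  | succ n ih =>
    rw [Function.iterate_succ_apply', pow_succ', mul_assoc, ← ((hwc _).pow_left _).lie_mul_left,
      ih, Ring.lie_smul, ((hzc _).pow_left _).lie_mul_left, mul_smul_comm, ← mul_assoc,
      ← ((hzc _).pow_left _).eq, mul_assoc, mul_lie_pow_succ_of_mul_lie_eq hw hwc hzc h (n + 1),
      mul_smul_comm, ← mul_assoc, ← pow_succ, smul_smul, Nat.factorial_succ (n + 1)]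
    congr 1
    push_cast
    ring

theorem iterate_lie_eq_zero_of_charP (p : ℕ) [CharP k p] (hp : p ≠ 0) (hw : IsLeftRegular w)
    (hwc : ∀ x, Commute w x) (hzc : ∀ x, Commute z x)
    (h : w * ⁅u, v⁆ = c • (z * (v - u) ^ 2)) :
    (fun x ↦ ⁅u, x⁆)^[p] v = 0 := by
  obtain ⟨n, rfl⟩ := Nat.exists_eq_succ_of_ne_zero hp
  have hfac : ((n + 1).factorial : k) = 0 :=
    (CharP.cast_eq_zero_iff k (n + 1) _).2 (Nat.dvd_factorial n.succ_pos le_rfl)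
  have := mul_iterate_lie_eq hw hwc hzc h n
  rw [hfac, zero_mul, zero_smul] at this
  exact isLeftRegular_iff_right_eq_zero_of_mul.1 (hw.pow _) _ this

end

theorem stmt9_general {k A : Type*} [Field k] [Ring A] [Algebra k A]
    (p : ℕ) [Fact p.Prime] [CharP k p]
    (c : k) (e : ℕ → A)
    (hee : (Xv - Xu) * ⁅Useries e, Vseries e⁆ =
      c • (Xu * Xv * (Vseries e - Useries e) ^ 2)) :
    (fun S : MvPowerSeries (Fin 2) A => ⁅Useries e, S⁆)^[p] (Vseries e) = 0 :=
  iterate_lie_eq_zero_of_charP p (Fact.out : p.Prime).ne_zero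
    (MvPowerSeries.isLeftRegular_X_sub_X one_ne_zero)
    (fun x ↦ (MvPowerSeries.commute_X x 1).symm.sub_left (MvPowerSeries.commute_X x 0).symm)
    (fun x ↦ (MvPowerSeries.commute_X x 0).symm.mul_left (MvPowerSeries.commute_X x 1).symm) hee

theorem stmt9 {k A : Type*} [Field k] [Ring A] [Algebra k A]
    (p : ℕ) [Fact p.Prime] [CharP k p] (hp : 2 < p)
    (c : k) (hc : c = 1 ∨ c = 1 / 2) (e : ℕ → A) (he0 : e 0 = 0)
    (hee : (Xv - Xu) * ⁅Useries e, Vseries e⁆ =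
      c • (Xu * Xv * (Vseries e - Useries e) ^ 2)) :
    (fun S : MvPowerSeries (Fin 2) A => ⁅Useries e, S⁆)^[p] (Vseries e) = 0 :=
  stmt9_general p c e hee
end
end

section
/- Let A be an associative algebra over a field and suppose series h(u) = 1 + Σ_{r≥1} h^{(r)}u^{-r} and e(u) = Σ_{r≥1} e^{(r)}u^{-r} satisfy (u-v)[h(u),e(v)] = -h(u)(e(u)-e(v)) (equivalently (u-v)[e(v),h(u)] = h(u)(e(u)-e(v))). Then e(u-1) h(u) = h(u) e(u), where e(u-1) denotes the series obtained by substituting u-1 for u. -/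
/-!
Substitute `v = u - 1`. Since `u - (u - 1) = 1`, the hypothesis becomes
`[h(u), e(u-1)] = -h(u) (e(u) - e(u-1))`, which rearranges to `e(u-1) h(u) = h(u) e(u)`.

In the variables `X = u⁻¹` and `v⁻¹` the substitution is `v⁻¹ ↦ (u - 1)⁻¹ = X / (1 - X)`. It is a
ring homomorphism `A[[u⁻¹, v⁻¹]] → A[[X]]` because `X / (1 - X)` has integer coefficients, hence
is central, and no constant term, hence the substitution converges. The factor `u - v` enters the
hypothesis as `v⁻¹ - u⁻¹ = u⁻¹ v⁻¹ (u - v)`; it is sent to `X · X / (1 - X)`, which is left regular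
and can be cancelled.
-/

noncomputable section

/-- Coefficients of the shifted series `f(u + c) = Σ_r f^{(r)} (u + c)^{-r}`,
via the expansion `(u+c)^{-r} = Σ_{s ≥ 0} (-c)^s * choose (r+s-1) s * u^{-r-s}`:
the coefficient of `u^{-m}` is `Σ_{r ≤ m} (-c)^{m-r} * choose (m-1) (m-r) * f r`. -/
def shiftCoeff {A : Type*} [Ring A] (c : ℤ) (f : ℕ → A) (m : ℕ) : A :=
  ∑ r ∈ Finset.range (m + 1), ((-c) ^ (m - r) * (Nat.choose (m - 1) (m - r) : ℤ)) • f r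

open Finset PowerSeries

lemma Finset.sum_range_sum_antidiagonal_eq_sum_range_sum_range {M : Type*} [AddCommMonoid M]
    (n : ℕ) (f : ℕ → ℕ → M) (hf : ∀ i j, n ≤ i + j → f i j = 0) :
    ∑ b ∈ range n, ∑ p ∈ antidiagonal b, f p.1 p.2 = ∑ i ∈ range n, ∑ j ∈ range n, f i j := by
  simp_rw [Nat.sum_antidiagonal_eq_sum_range_succ f, sum_range_diag_flip]
  refine sum_congr rfl fun i _ => sum_subset (range_subset_range.2 (Nat.sub_le n i)) ?_
  intro j _ hj
  exact hf i j (by simp only [mem_range] at hj; omega)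

namespace PowerSeries

variable {R : Type*} [Ring R]

lemma commute_map_intCast (P : ℤ⟦X⟧) (Q : R⟦X⟧) :
    Commute (map (Int.castRingHom R) P) Q := by
  ext n
  rw [coeff_mul, coeff_mul, ← Finset.Nat.sum_antidiagonal_swap]
  refine sum_congr rfl fun p _ => ?_
  simp [(Int.cast_commute _ _).eq]

variable (R) in
/-- `(u - 1)⁻¹ = X / (1 - X)` in the variable `X = u⁻¹`, built over `ℤ` so that it is central. -/
def invShift : R⟦X⟧ := map (Int.castRingHom R) (X * (invOneSubPow ℤ 1 : ℤ⟦X⟧))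

lemma invShift_commute (Q : R⟦X⟧) : Commute (invShift R) Q :=
  commute_map_intCast _ Q

lemma invShift_pow (b : ℕ) :
    invShift R ^ b = X ^ b * map (Int.castRingHom R) (invOneSubPow ℤ b : ℤ⟦X⟧) := by
  rw [invShift, ← map_pow, mul_pow, ← Units.val_pow_eq_pow_val, invOneSubPow_eq_inv_one_sub_pow,
    invOneSubPow_eq_inv_one_sub_pow, pow_one, map_mul, map_pow, map_X]

lemma coeff_invShift_pow {b m : ℕ} (h : b ≤ m) :
    coeff m (invShift R ^ b) = ((m - 1).choose (m - b) : R) := by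
  rw [invShift_pow, coeff_X_pow_mul', if_pos h, coeff_map]
  rcases Nat.eq_zero_or_pos b with rfl | hb
  · rcases Nat.eq_zero_or_pos m with rfl | hm
    · simp [invOneSubPow_zero]
    · simp [invOneSubPow_zero, coeff_one, hm.ne', Nat.choose_eq_zero_of_lt (Nat.sub_lt hm one_pos)]
  · rw [invOneSubPow_val_eq_mk_sub_one_add_choose_of_pos _ _ hb, coeff_mk,
      show b - 1 + (m - b) = m - 1 by omega, ← Nat.choose_symm (by omega : b - 1 ≤ m - 1),
      show m - 1 - (b - 1) = m - b by omega]
    simp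

lemma mul_invShift_pow_mul_mul_invShift_pow (P Q : R⟦X⟧) (i j : ℕ) :
    P * invShift R ^ i * (Q * invShift R ^ j) = P * Q * invShift R ^ (i + j) := by
  rw [pow_add, mul_assoc, ← mul_assoc (invShift R ^ i), ((invShift_commute Q).pow_left i).eq]
  simp only [mul_assoc]

lemma coeff_mul_invShift_pow_of_lt (P : R⟦X⟧) {b m : ℕ} (h : m < b) :
    coeff m (P * invShift R ^ b) = 0 := by
  rw [invShift_pow, ← mul_assoc, (commute_X_pow P b).eq, mul_assoc, coeff_X_pow_mul',
    if_neg (by omega)]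

lemma one_sub_X_mul_invShift : (1 - X) * invShift R = X := by
  have h : (1 - X : ℤ⟦X⟧) * (invOneSubPow ℤ 1 : ℤ⟦X⟧) = 1 := by
    rw [← pow_one (1 - X), ← invOneSubPow_inv_eq_one_sub_pow]
    exact (invOneSubPow ℤ 1).inv_val
  rw [invShift, ← map_X (Int.castRingHom R), ← map_one (map (Int.castRingHom R)), ← map_sub,
    ← map_mul, mul_left_comm, h, mul_one]

lemma invShift_sub_X : invShift R - X = X * invShift R := by
  conv_lhs => rw [← one_sub_X_mul_invShift (R := R)]
  noncomm_ring

lemma isLeftRegular_invShift : IsLeftRegular (invShift R) := by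
  have hX : IsLeftRegular (X : R⟦X⟧) := fun _ _ => X_mul_cancel
  rw [← one_sub_X_mul_invShift] at hX
  exact hX.of_mul

end PowerSeries

namespace MvPowerSeries

open Finsupp

variable {R : Type*} [Ring R]

lemma eq_single_add_single (d : Fin 2 →₀ ℕ) : d = single 0 (d 0) + single 1 (d 1) :=
  Finsupp.ext (Fin.forall_fin_two.2 ⟨by simp, by simp⟩)

/-- `F = ∑ b, vCoeff F b • v⁻ᵇ`, each `vCoeff F b` being a series in `X = u⁻¹`. -/
def vCoeff (F : MvPowerSeries (Fin 2) R) (b : ℕ) : R⟦X⟧ :=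
  PowerSeries.mk fun a => coeff (single 0 a + single 1 b) F

lemma coeff_vCoeff (F : MvPowerSeries (Fin 2) R) (a b : ℕ) :
    PowerSeries.coeff a (vCoeff F b) = coeff (single 0 a + single 1 b) F :=
  PowerSeries.coeff_mk _ _

lemma vCoeff_mul (F G : MvPowerSeries (Fin 2) R) (b : ℕ) :
    vCoeff (F * G) b = ∑ p ∈ antidiagonal b, vCoeff F p.1 * vCoeff G p.2 := by
  ext a
  simp only [coeff_vCoeff, coeff_mul, map_sum, PowerSeries.coeff_mul, sum_sigma']
  refine sum_nbij' (fun p => ⟨(p.1 1, p.2 1), (p.1 0, p.2 0)⟩)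
    (fun x => (single 0 x.2.1 + single 1 x.1.1, single 0 x.2.2 + single 1 x.1.2))
    ?_ ?_ ?_ ?_ ?_
  all_goals simp +contextual [Finsupp.ext_iff, Fin.forall_fin_two, ← eq_single_add_single]

lemma vCoeff_one (b : ℕ) : vCoeff (1 : MvPowerSeries (Fin 2) R) b = if b = 0 then 1 else 0 := by
  ext a
  rw [coeff_vCoeff, coeff_one]
  split_ifs <;> simp_all [Finsupp.ext_iff, Fin.forall_fin_two, PowerSeries.coeff_one]

/-- The substitution `v⁻¹ ↦ (u - 1)⁻¹`. As `invShift R ^ b` has order `b`, only the terms with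
`b ≤ m` contribute to the coefficient of `X ^ m`. -/
def substInvShift (F : MvPowerSeries (Fin 2) R) : R⟦X⟧ :=
  PowerSeries.mk fun m => ∑ b ∈ range (m + 1), PowerSeries.coeff m (vCoeff F b * invShift R ^ b)

lemma coeff_substInvShift {m N : ℕ} (h : m < N) (F : MvPowerSeries (Fin 2) R) :
    PowerSeries.coeff m (substInvShift F) =
      ∑ b ∈ range N, PowerSeries.coeff m (vCoeff F b * invShift R ^ b) := by
  rw [substInvShift, PowerSeries.coeff_mk]
  refine sum_subset (range_subset_range.2 h) fun b _ hb => ?_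
  exact coeff_mul_invShift_pow_of_lt _ (by simpa using hb)

lemma substInvShift_mul (F G : MvPowerSeries (Fin 2) R) :
    substInvShift (F * G) = substInvShift F * substInvShift G := by
  ext m
  have hsq : ∀ i j, m + 1 ≤ i + j →
      PowerSeries.coeff m (vCoeff F i * invShift R ^ i * (vCoeff G j * invShift R ^ j)) = 0 := by
    intro i j hij
    rw [mul_invShift_pow_mul_mul_invShift_pow]
    exact coeff_mul_invShift_pow_of_lt _ (by omega)
  calc PowerSeries.coeff m (substInvShift (F * G))
      = ∑ b ∈ range (m + 1), ∑ p ∈ antidiagonal b, PowerSeries.coeff m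
          (vCoeff F p.1 * invShift R ^ p.1 * (vCoeff G p.2 * invShift R ^ p.2)) := by
        rw [coeff_substInvShift (Nat.lt_succ_self m)]
        refine sum_congr rfl fun b _ => ?_
        rw [vCoeff_mul, Finset.sum_mul, map_sum]
        refine sum_congr rfl fun p hp => ?_
        rw [mul_invShift_pow_mul_mul_invShift_pow, HasAntidiagonal.mem_antidiagonal.1 hp]
    _ = ∑ i ∈ range (m + 1), ∑ j ∈ range (m + 1), PowerSeries.coeff m
          (vCoeff F i * invShift R ^ i * (vCoeff G j * invShift R ^ j)) :=
        sum_range_sum_antidiagonal_eq_sum_range_sum_range _ _ hsq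
    _ = ∑ p ∈ antidiagonal m,
          (∑ i ∈ range (m + 1), PowerSeries.coeff p.1 (vCoeff F i * invShift R ^ i)) *
            ∑ j ∈ range (m + 1), PowerSeries.coeff p.2 (vCoeff G j * invShift R ^ j) := by
        simp_rw [sum_mul_sum]
        conv_rhs => rw [Finset.sum_comm]
        refine sum_congr rfl fun i _ => ?_
        conv_rhs => rw [Finset.sum_comm]
        exact sum_congr rfl fun j _ => PowerSeries.coeff_mul _ _ _
    _ = PowerSeries.coeff m (substInvShift F * substInvShift G) := by
        rw [PowerSeries.coeff_mul]
        refine sum_congr rfl fun p hp => ?_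
        rw [HasAntidiagonal.mem_antidiagonal] at hp
        rw [coeff_substInvShift (N := m + 1) (by omega),
          coeff_substInvShift (N := m + 1) (by omega)]

lemma substInvShift_one : substInvShift (1 : MvPowerSeries (Fin 2) R) = 1 := by
  ext m
  simp [substInvShift, vCoeff_one, apply_ite (PowerSeries.coeff m), PowerSeries.coeff_one]

lemma substInvShift_add (F G : MvPowerSeries (Fin 2) R) :
    substInvShift (F + G) = substInvShift F + substInvShift G := by
  ext m
  have hadd : ∀ b, vCoeff (F + G) b = vCoeff F b + vCoeff G b := fun b => by
    ext a; simp [coeff_vCoeff]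
  simp [substInvShift, hadd, add_mul, sum_add_distrib]

def substInvShiftRingHom : MvPowerSeries (Fin 2) R →+* R⟦X⟧ where
  toFun := substInvShift
  map_one' := substInvShift_one
  map_mul' := substInvShift_mul
  map_zero' := by simpa using substInvShift_add (0 : MvPowerSeries (Fin 2) R) 0
  map_add' := substInvShift_add

lemma vCoeff_Useries (f : ℕ → R) (b : ℕ) :
    vCoeff (Useries f) b = if b = 0 then PowerSeries.mk f else 0 := by
  ext a
  rw [coeff_vCoeff]
  split_ifs <;> simp_all [Useries, coeff_apply]

lemma vCoeff_Vseries (f : ℕ → R) (b : ℕ) : vCoeff (Vseries f) b = PowerSeries.C (f b) := by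
  ext a
  rw [coeff_vCoeff, PowerSeries.coeff_C]
  split_ifs <;> simp_all [Vseries, coeff_apply]

lemma vCoeff_Xu (b : ℕ) :
    vCoeff (Xu : MvPowerSeries (Fin 2) R) b = if b = 0 then PowerSeries.X else 0 := by
  ext a
  rw [coeff_vCoeff, Xu, coeff_X]
  split_ifs <;> simp_all [Finsupp.ext_iff, Fin.forall_fin_two, PowerSeries.coeff_X]

lemma vCoeff_Xv (b : ℕ) : vCoeff (Xv : MvPowerSeries (Fin 2) R) b = if b = 1 then 1 else 0 := by
  ext a
  rw [coeff_vCoeff, Xv, coeff_X]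
  split_ifs <;> simp_all [Finsupp.ext_iff, Fin.forall_fin_two, PowerSeries.coeff_one]

lemma substInvShiftRingHom_Useries (f : ℕ → R) :
    substInvShiftRingHom (Useries f) = PowerSeries.mk f := by
  ext m
  simp [substInvShiftRingHom, substInvShift, vCoeff_Useries, apply_ite (PowerSeries.coeff m)]

lemma substInvShiftRingHom_Vseries (f : ℕ → R) :
    substInvShiftRingHom (Vseries f) = PowerSeries.mk (shiftCoeff (-1) f) := by
  ext m
  simp only [substInvShiftRingHom, RingHom.coe_mk, MonoidHom.coe_mk, OneHom.coe_mk, substInvShift,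
    vCoeff_Vseries, PowerSeries.coeff_mk, PowerSeries.coeff_C_mul, shiftCoeff]
  refine sum_congr rfl fun b hb => ?_
  rw [coeff_invShift_pow (by simpa [Nat.lt_succ_iff] using hb)]
  simp [(Nat.cast_commute _ _).eq]

lemma substInvShiftRingHom_Xu :
    substInvShiftRingHom (Xu : MvPowerSeries (Fin 2) R) = PowerSeries.X := by
  ext m
  simp [substInvShiftRingHom, substInvShift, vCoeff_Xu, apply_ite (PowerSeries.coeff m)]

lemma substInvShiftRingHom_Xv :
    substInvShiftRingHom (Xv : MvPowerSeries (Fin 2) R) = invShift R := by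
  ext m
  change PowerSeries.coeff m (substInvShift Xv) = _
  rw [coeff_substInvShift (N := m + 2) (by omega)]
  simp [vCoeff_Xv, apply_ite (PowerSeries.coeff m)]

end MvPowerSeries

open MvPowerSeries in
theorem stmt11_general {A : Type*} [Ring A]
    (h e : ℕ → A)
    (hhe : (Xv - Xu) * ⁅Useries h, Vseries e⁆ =
      -(Xu * Xv * (Useries h * (Useries e - Vseries e)))) :
    PowerSeries.mk (shiftCoeff (-1) e) * PowerSeries.mk h =
      PowerSeries.mk h * PowerSeries.mk e := by
  set H := PowerSeries.mk h
  set E := PowerSeries.mk e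
  set E' := PowerSeries.mk (shiftCoeff (-1) e)
  have hsubst := congrArg (substInvShiftRingHom (R := A)) hhe
  simp only [Ring.lie_def, map_mul, map_sub, map_neg, substInvShiftRingHom_Useries,
    substInvShiftRingHom_Vseries, substInvShiftRingHom_Xu, substInvShiftRingHom_Xv,
    invShift_sub_X, mul_assoc, ← mul_neg] at hsubst
  have hcomm : H * E' - E' * H = H * -(E - E') :=
    isLeftRegular_invShift (PowerSeries.X_mul_cancel hsubst)
  calc E' * H = H * E' - (H * E' - E' * H) := by abel
    _ = H * E := by rw [hcomm]; noncomm_ring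

theorem stmt11 {k A : Type*} [Field k] [Ring A] [Algebra k A]
    (h e : ℕ → A) (hh0 : h 0 = 1) (he0 : e 0 = 0)
    (hhe : (Xv - Xu) * ⁅Useries h, Vseries e⁆ =
      -(Xu * Xv * (Useries h * (Useries e - Vseries e)))) :
    PowerSeries.mk (shiftCoeff (-1) e) * PowerSeries.mk h =
      PowerSeries.mk h * PowerSeries.mk e :=
  stmt11_general h e hhe
end
end

section
/- Let A be an associative algebra over a field with series h(u) ∈ 1 + u^{-1}A[[u^{-1}]] and e(v) ∈ v^{-1}A[[v^{-1}]] satisfying (u-v)[h(u), e(v)] = h(u)(e(u) - e(v)), together with the exchange relation e(u+1)h(u) = h(u)e(u). Define h_{↑ℓ}(u) := h(u)h(u+1)⋯h(u+ℓ-1). Then for all ℓ ≥ 1: (u-v)[h_{↑ℓ}(u), e(v)] = ℓ · h_{↑ℓ}(u)(e(u) - e(v)). -/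
/-!
STATEMENT 14: Let `A` be an associative algebra over a field with series
`h(u) ∈ 1 + u⁻¹A[[u⁻¹]]` and `e(v) ∈ v⁻¹A[[v⁻¹]]` satisfying
`(u - v)[h(u), e(v)] = h(u)(e(u) - e(v))` and the exchange relation
`e(u+1) h(u) = h(u) e(u)`.  Define `h_{↑ℓ}(u) := h(u) h(u+1) ⋯ h(u+ℓ-1)`.
Then for all `ℓ ≥ 1`:
`(u - v)[h_{↑ℓ}(u), e(v)] = ℓ · h_{↑ℓ}(u)(e(u) - e(v))`.

Laurent convention: `(u - v) * S = T` is encoded as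
`(v⁻¹ - u⁻¹) * S = u⁻¹ * v⁻¹ * T` in `MvPowerSeries (Fin 2) A`
(variable `0` is `u⁻¹`, variable `1` is `v⁻¹`); a shift `h(u+j)` is defined
via its coefficients `shiftCoeff j h`.
-/

noncomputable section

/-- `h_{↑ℓ}(u) = h(u) h(u+1) ⋯ h(u+ℓ-1)` in `A[[u⁻¹, v⁻¹]]`. -/
def hUp {A : Type*} [Ring A] (h : ℕ → A) (ℓ : ℕ) : MvPowerSeries (Fin 2) A :=
  ((List.range ℓ).map (fun j => Useries (shiftCoeff (j : ℤ) h))).prod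


/-!
Both relations needed for the induction are images of the defining relation under substitutions
of the spectral parameters. These are ring endomorphisms of `A[[u⁻¹, v⁻¹]]`: the variables are
central and the substituted series have integer coefficients, so the usual substitution
argument works without commutativity of `A`. Substituting `u ↦ u + c` gives
`(u + c - v)[h(u+c), e(v)] = h(u+c)(e(u+c) - e(v))`, and then setting `v = u` gives
`c [h(u+c), e(u)] = h(u+c)(e(u+c) - e(u))`. Writing `h_{↑(n+1)}(u) = h_{↑n}(u) h(u+n)` and
expanding the commutator, these two relations carry the identity from `n` to `n + 1`.
-/

open Finset

namespace MvPowerSeries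

variable {σ τ A : Type*} [Ring A]

def substMonomial (a : σ → MvPowerSeries τ ℤ) (e : σ →₀ ℕ) : MvPowerSeries τ ℤ :=
  e.prod fun i k => a i ^ k

section substMonomial

variable (a : σ → MvPowerSeries τ ℤ)

lemma substMonomial_add (e e' : σ →₀ ℕ) :
    substMonomial a (e + e') = substMonomial a e * substMonomial a e' :=
  Finsupp.prod_add_index' (fun _ => pow_zero _) fun _ _ _ => pow_add _ _ _

@[simp] lemma substMonomial_single (i : σ) (k : ℕ) :
    substMonomial a (Finsupp.single i k) = a i ^ k :=
  Finsupp.prod_single_index (pow_zero _)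

lemma coeff_substMonomial_of_degree_lt (ha : ∀ i, constantCoeff (a i) = 0)
    {d : τ →₀ ℕ} {e : σ →₀ ℕ} (h : d.degree < e.degree) :
    coeff d (substMonomial a e) = 0 := by
  refine coeff_of_lt_order (lt_of_lt_of_le (b := (e.degree : ℕ∞)) (by exact_mod_cast h) ?_)
  calc (e.degree : ℕ∞) = ∑ i ∈ e.support, (e i : ℕ∞) := by simp [Finsupp.degree_apply]
    _ ≤ ∑ i ∈ e.support, (a i ^ e i).order :=
      sum_le_sum fun i _ => le_order_pow_of_constantCoeff_eq_zero _ (ha i)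
    _ ≤ (substMonomial a e).order := le_order_prod _ _

end substMonomial

variable [Finite σ]

def degreeLE (n : ℕ) : Finset (σ →₀ ℕ) := (Finsupp.finite_of_degree_le n).toFinset

@[simp] lemma mem_degreeLE {n : ℕ} {e : σ →₀ ℕ} : e ∈ degreeLE n ↔ e.degree ≤ n :=
  Set.Finite.mem_toFinset _

lemma sum_degreeLE_sum_antidiagonal {M : Type*} [AddCommMonoid M] [DecidableEq σ] (n : ℕ)
    (g : (σ →₀ ℕ) × (σ →₀ ℕ) → M) (hg : ∀ q, n < (q.1 + q.2).degree → g q = 0) :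
    ∑ e ∈ degreeLE n, ∑ q ∈ antidiagonal e, g q = ∑ q ∈ degreeLE n ×ˢ degreeLE n, g q := by
  set T : Finset (σ →₀ ℕ) := degreeLE n
  have fibre : ∀ e ∈ T, {q ∈ T ×ˢ T | q.1 + q.2 = e} = antidiagonal e := by
    intro e he
    ext q
    simp only [T, mem_filter, mem_product, HasAntidiagonal.mem_antidiagonal, mem_degreeLE]
    refine ⟨fun h => h.2, fun h => ⟨?_, h⟩⟩
    rw [mem_degreeLE, ← h, map_add] at he
    omega
  rw [← sum_filter_of_ne (p := fun q : (σ →₀ ℕ) × (σ →₀ ℕ) => q.1 + q.2 ∈ T)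
    fun q _ hq => by_contra fun h => hq (hg q (not_le.1 (mem_degreeLE.not.1 h))),
    ← sum_fiberwise_eq_sum_filter (T ×ˢ T) T fun q => q.1 + q.2]
  exact sum_congr rfl fun e he => by rw [fibre e he]

def substIntFun (a : σ → MvPowerSeries τ ℤ) (F : MvPowerSeries σ A) : MvPowerSeries τ A :=
  fun d => ∑ e ∈ degreeLE d.degree, coeff d (substMonomial a e) • coeff e F

section

variable {a : σ → MvPowerSeries τ ℤ}

lemma coeff_substIntFun (ha : ∀ i, constantCoeff (a i) = 0) {d : τ →₀ ℕ} {T : Finset (σ →₀ ℕ)}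
    (hT : ∀ e, e.degree ≤ d.degree → e ∈ T) (F : MvPowerSeries σ A) :
    coeff d (substIntFun a F) = ∑ e ∈ T, coeff d (substMonomial a e) • coeff e F := by
  refine sum_subset (fun e he => hT e (mem_degreeLE.1 he)) fun e _ he => ?_
  rw [coeff_substMonomial_of_degree_lt a ha (not_le.1 (mem_degreeLE.not.1 he)), zero_smul]

lemma substIntFun_mul (ha : ∀ i, constantCoeff (a i) = 0) (F G : MvPowerSeries σ A) :
    substIntFun a (F * G) = substIntFun a F * substIntFun a G := by
  classical
  ext d
  set T : Finset (σ →₀ ℕ) := degreeLE d.degree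
  set K : (τ →₀ ℕ) → (σ →₀ ℕ) → ℤ := fun d e => coeff d (substMonomial a e)
  have hKmul : ∀ e₁ e₂, ∑ p ∈ antidiagonal d, K p.1 e₁ * K p.2 e₂ = K d (e₁ + e₂) := by
    intro e₁ e₂
    simp only [K, substMonomial_add, coeff_mul]
  calc coeff d (substIntFun a (F * G))
      = ∑ e ∈ T, ∑ q ∈ antidiagonal e, K d (q.1 + q.2) • (coeff q.1 F * coeff q.2 G) := by
        rw [coeff_substIntFun ha fun e => mem_degreeLE.2]
        refine sum_congr rfl fun e _ => ?_
        rw [coeff_mul, smul_sum]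
        exact sum_congr rfl fun q hq => by rw [HasAntidiagonal.mem_antidiagonal.1 hq]
    _ = ∑ q ∈ T ×ˢ T, K d (q.1 + q.2) • (coeff q.1 F * coeff q.2 G) :=
        sum_degreeLE_sum_antidiagonal _ _ fun q hq => by
          rw [show K d (q.1 + q.2) = 0 from coeff_substMonomial_of_degree_lt a ha hq, zero_smul]
    _ = ∑ p ∈ antidiagonal d, ∑ e₁ ∈ T, ∑ e₂ ∈ T,
          (K p.1 e₁ * K p.2 e₂) • (coeff e₁ F * coeff e₂ G) := by
        rw [sum_product, eq_comm, sum_comm]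
        refine sum_congr rfl fun e₁ _ => ?_
        rw [sum_comm]
        exact sum_congr rfl fun e₂ _ => by rw [← sum_smul, hKmul]
    _ = coeff d (substIntFun a F * substIntFun a G) := by
        rw [coeff_mul]
        refine sum_congr rfl fun p hp => ?_
        have hdeg : p.1.degree + p.2.degree = d.degree := by
          rw [← map_add, HasAntidiagonal.mem_antidiagonal.1 hp]
        rw [coeff_substIntFun ha (T := T) fun e he => mem_degreeLE.2 (by omega),
          coeff_substIntFun ha (T := T) fun e he => mem_degreeLE.2 (by omega), sum_mul_sum]
        simp only [smul_mul_smul_comm, K]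

end

/-- Substitution `X i ↦ a i`. Since the variables are central and the `a i` have integer
coefficients, this is a ring homomorphism even when `A` is not commutative. -/
def substInt (a : σ → MvPowerSeries τ ℤ) (ha : ∀ i, constantCoeff (a i) = 0) :
    MvPowerSeries σ A →+* MvPowerSeries τ A where
  toFun := substIntFun a
  map_one' := by
    classical
    ext d
    rw [coeff_substIntFun ha fun e => mem_degreeLE.2, sum_eq_single 0]
    · simp [coeff_one, substMonomial]
    · intro e _ he
      rw [coeff_one, if_neg he, smul_zero]
    · intro h
      exact absurd (mem_degreeLE.2 (by simp)) h
  map_mul' := substIntFun_mul ha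
  map_zero' := by
    ext d
    simp [coeff_substIntFun ha fun e => mem_degreeLE.2]
  map_add' F G := by
    ext d
    simp [coeff_substIntFun ha fun e => mem_degreeLE.2, smul_add, sum_add_distrib]

section

variable {a : σ → MvPowerSeries τ ℤ} (ha : ∀ i, constantCoeff (a i) = 0)

lemma coeff_substInt {d : τ →₀ ℕ} {T : Finset (σ →₀ ℕ)} (hT : ∀ e, e.degree ≤ d.degree → e ∈ T)
    (F : MvPowerSeries σ A) :
    coeff d (substInt a ha F) = ∑ e ∈ T, coeff d (substMonomial a e) • coeff e F :=
  coeff_substIntFun ha hT F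

lemma substInt_X (i : σ) :
    substInt a ha (X i : MvPowerSeries σ A) = map (Int.castRingHom A) (a i) := by
  classical
  ext d
  rw [coeff_substInt ha fun e => mem_degreeLE.2, sum_eq_single (Finsupp.single i 1)]
  · simp [coeff_X]
  · intro e _ he
    rw [coeff_X, if_neg he, smul_zero]
  · intro h
    rw [coeff_substMonomial_of_degree_lt a ha (not_le.1 (mem_degreeLE.not.1 h)), zero_smul]

lemma coeff_substInt_of_coeff_eq_zero (i : σ) {F : MvPowerSeries σ A}
    (hF : ∀ e, e ≠ Finsupp.single i (e i) → coeff e F = 0) (d : τ →₀ ℕ) :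
    coeff d (substInt a ha F) =
      ∑ k ∈ range (d.degree + 1), coeff d (a i ^ k) • coeff (Finsupp.single i k) F := by
  rw [coeff_substInt ha fun e => mem_degreeLE.2,
    ← sum_subset (s₁ := (range (d.degree + 1)).map ⟨_, Finsupp.single_injective i⟩)]
  · simp
  · intro e he
    obtain ⟨k, hk, rfl⟩ := mem_map.1 he
    simpa [Nat.lt_succ_iff] using hk
  · intro e he he'
    rw [hF e fun h => he' (mem_map.2 ⟨e i, ?_, h.symm⟩), smul_zero]
    exact mem_range_succ_iff.2 ((Finsupp.le_degree i e).trans (mem_degreeLE.1 he))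

end

end MvPowerSeries

namespace MvPowerSeries

lemma sum_coeff_X_pow_smul {σ M : Type*} [DecidableEq σ] [AddCommGroup M] (i : σ) (d : σ →₀ ℕ)
    (g : ℕ → M) :
    ∑ k ∈ range (d.degree + 1), coeff d (X i ^ k : MvPowerSeries σ ℤ) • g k =
      if d = Finsupp.single i (d i) then g (d i) else 0 := by
  split_ifs with hd
  · rw [sum_eq_single (d i)]
    · rw [coeff_X_pow, if_pos hd, one_smul]
    · intro k _ hk
      rw [coeff_X_pow, if_neg fun h => hk (by rw [h]; simp), zero_smul]
    · exact fun h => absurd (mem_range_succ_iff.2 (Finsupp.le_degree i d)) h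
  · refine sum_eq_zero fun k _ => ?_
    rw [coeff_X_pow, if_neg fun h => hd (by rw [h]; simp), zero_smul]

lemma X_mul_left_cancel {σ A : Type*} [Ring A] (i : σ) {F G : MvPowerSeries σ A}
    (h : X i * F = X i * G) : F = G := by
  classical
  ext n
  have := congrArg (coeff (n + Finsupp.single i 1)) h
  rwa [X_def, coeff_monomial_mul, coeff_monomial_mul, if_pos le_add_self, if_pos le_add_self,
    add_tsub_cancel_right, one_mul, one_mul] at this

end MvPowerSeries

lemma Finsupp.fin_two_eq_single_zero_iff (e : Fin 2 →₀ ℕ) :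
    e = Finsupp.single 0 (e 0) ↔ e 1 = 0 := by
  refine ⟨fun h => by rw [h]; simp, fun h => ?_⟩
  ext i
  fin_cases i <;> simp [h]

lemma Finsupp.fin_two_eq_single_one_iff (e : Fin 2 →₀ ℕ) :
    e = Finsupp.single 1 (e 1) ↔ e 0 = 0 := by
  refine ⟨fun h => by rw [h]; simp, fun h => ?_⟩
  ext i
  fin_cases i <;> simp [h]

section SpectralSubstitutions

open MvPowerSeries

variable {A : Type*} [Ring A]

lemma coeff_Useries (f : ℕ → A) (d : Fin 2 →₀ ℕ) :
    coeff d (Useries f) = if d 1 = 0 then f (d 0) else 0 := rfl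

lemma coeff_Vseries (f : ℕ → A) (d : Fin 2 →₀ ℕ) :
    coeff d (Vseries f) = if d 0 = 0 then f (d 1) else 0 := rfl

@[simp] lemma coeff_single_zero_Useries (f : ℕ → A) (k : ℕ) :
    coeff (Finsupp.single 0 k) (Useries f) = f k := by
  simp [coeff_Useries]

@[simp] lemma coeff_single_one_Vseries (f : ℕ → A) (k : ℕ) :
    coeff (Finsupp.single 1 k) (Vseries f) = f k := by
  simp [coeff_Vseries]

lemma coeff_Useries_of_ne {f : ℕ → A} {e : Fin 2 →₀ ℕ} (he : e ≠ Finsupp.single 0 (e 0)) :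
    coeff e (Useries f) = 0 := by
  rw [coeff_Useries, if_neg ((Finsupp.fin_two_eq_single_zero_iff e).not.1 he)]

lemma coeff_Vseries_of_ne {f : ℕ → A} {e : Fin 2 →₀ ℕ} (he : e ≠ Finsupp.single 1 (e 1)) :
    coeff e (Vseries f) = 0 := by
  rw [coeff_Vseries, if_neg ((Finsupp.fin_two_eq_single_one_iff e).not.1 he)]

/-- The substitution `v ↦ u`. -/
def diagSubst : MvPowerSeries (Fin 2) A →+* MvPowerSeries (Fin 2) A :=
  substInt (fun _ => X 0) fun _ => constantCoeff_X 0

lemma diagSubst_Useries (f : ℕ → A) : diagSubst (Useries f) = Useries f := by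
  ext d
  rw [diagSubst, coeff_substInt_of_coeff_eq_zero _ 0 fun _ => coeff_Useries_of_ne]
  simp only [coeff_single_zero_Useries]
  simp only [sum_coeff_X_pow_smul, Finsupp.fin_two_eq_single_zero_iff, coeff_Useries]

lemma diagSubst_Vseries (f : ℕ → A) : diagSubst (Vseries f) = Useries f := by
  ext d
  rw [diagSubst, coeff_substInt_of_coeff_eq_zero _ 1 fun _ => coeff_Vseries_of_ne]
  simp only [coeff_single_one_Vseries]
  simp only [sum_coeff_X_pow_smul, Finsupp.fin_two_eq_single_zero_iff, coeff_Useries]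

lemma diagSubst_Xu : diagSubst (Xu : MvPowerSeries (Fin 2) A) = Xu := by
  rw [diagSubst, Xu, substInt_X, map_X]

lemma diagSubst_Xv : diagSubst (Xv : MvPowerSeries (Fin 2) A) = Xu := by
  rw [diagSubst, Xv, Xu, substInt_X, map_X]

/-- `(u + c)⁻¹ = u⁻¹ (1 + c u⁻¹)⁻¹` as a power series in `X = u⁻¹`. -/
def shiftSeries (c : ℤ) : PowerSeries ℤ :=
  PowerSeries.X * PowerSeries.rescale (-c) (PowerSeries.mk 1)

lemma one_add_smul_X_mul_shiftSeries (c : ℤ) :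
    (1 + c • PowerSeries.X) * shiftSeries c = PowerSeries.X := by
  have h := congrArg (PowerSeries.rescale (-c)) (PowerSeries.mk_one_mul_one_sub_eq_one (S := ℤ))
  rw [map_mul, map_sub, map_one, PowerSeries.rescale_X, map_neg] at h
  rw [shiftSeries, zsmul_eq_mul, ← eq_intCast (PowerSeries.C (R := ℤ)) c]
  linear_combination PowerSeries.X * h

lemma coeff_shiftSeries_pow (c : ℤ) {r m : ℕ} (h : r ≤ m) :
    PowerSeries.coeff m (shiftSeries c ^ r) = (-c) ^ (m - r) * ((m - 1).choose (m - r) : ℤ) := by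
  rw [shiftSeries, mul_pow, ← map_pow, PowerSeries.coeff_X_pow_mul', if_pos h,
    PowerSeries.coeff_rescale]
  rcases r with _ | k
  · rcases m with _ | m <;> simp [PowerSeries.coeff_one]
  · rw [PowerSeries.mk_one_pow_eq_mk_choose_add, PowerSeries.coeff_mk,
      show k + (m - (k + 1)) = m - 1 by omega]
    congr 2
    exact Nat.choose_symm_of_eq_add (by omega)

def uEmbed : PowerSeries ℤ →ₐ[ℤ] MvPowerSeries (Fin 2) ℤ :=
  rename (Function.Embedding.punit (0 : Fin 2))

lemma coeff_uEmbed (p : PowerSeries ℤ) (d : Fin 2 →₀ ℕ) :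
    coeff d (uEmbed p) = if d 1 = 0 then PowerSeries.coeff (d 0) p else 0 := by
  by_cases hd : d 1 = 0
  · obtain ⟨k, rfl⟩ : ∃ k, d = Finsupp.single 0 k :=
      ⟨d 0, (Finsupp.fin_two_eq_single_zero_iff d).2 hd⟩
    have : Finsupp.single (0 : Fin 2) k =
        Finsupp.embDomain (Function.Embedding.punit 0) (Finsupp.single () k) := by
      rw [Finsupp.embDomain_single]
      rfl
    rw [if_pos hd, Finsupp.single_eq_same, uEmbed, this, coeff_embDomain_rename]
    rfl
  · rw [if_neg hd]
    refine coeff_rename_eq_zero _ _ fun ⟨x, hx⟩ => hd ?_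
    rw [← hx, Finsupp.mapDomain_of_notMem_range]
    simp [Function.Embedding.punit]

lemma uEmbed_X : uEmbed PowerSeries.X = X 0 := rename_X _ ()

lemma constantCoeff_uEmbed_shiftSeries (c : ℤ) : constantCoeff (uEmbed (shiftSeries c)) = 0 := by
  rw [← coeff_zero_eq_constantCoeff_apply, coeff_uEmbed]
  simp [shiftSeries]

/-- The substitution `u ↦ u + c`. -/
def shiftSubst (c : ℤ) : MvPowerSeries (Fin 2) A →+* MvPowerSeries (Fin 2) A :=
  substInt ![uEmbed (shiftSeries c), X 1] <| Fin.forall_fin_two.2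
    ⟨constantCoeff_uEmbed_shiftSeries c, constantCoeff_X 1⟩

lemma shiftSubst_Useries (c : ℤ) (f : ℕ → A) :
    shiftSubst c (Useries f) = Useries (shiftCoeff c f) := by
  ext d
  rw [shiftSubst, coeff_substInt_of_coeff_eq_zero _ 0 fun _ => coeff_Useries_of_ne]
  simp only [coeff_single_zero_Useries]
  simp only [Matrix.cons_val_zero, ← map_pow, coeff_uEmbed, coeff_Useries]
  split_ifs with hd
  · have hdeg : d.degree = d 0 := by simp [Finsupp.degree_eq_sum, hd]
    rw [hdeg, shiftCoeff]
    exact sum_congr rfl fun r hr => by rw [coeff_shiftSeries_pow c (mem_range_succ_iff.1 hr)]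
  · simp

lemma shiftSubst_Vseries (c : ℤ) (f : ℕ → A) : shiftSubst c (Vseries f) = Vseries f := by
  ext d
  rw [shiftSubst, coeff_substInt_of_coeff_eq_zero _ 1 fun _ => coeff_Vseries_of_ne]
  simp only [coeff_single_one_Vseries, Matrix.cons_val_one, Matrix.cons_val_zero]
  simp only [sum_coeff_X_pow_smul, Finsupp.fin_two_eq_single_one_iff, coeff_Vseries]

lemma shiftSubst_Xv (c : ℤ) : shiftSubst c (Xv : MvPowerSeries (Fin 2) A) = Xv := by
  rw [shiftSubst, Xv, substInt_X]
  simp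

lemma one_add_smul_Xu_mul_shiftSubst_Xu (c : ℤ) :
    (1 + c • Xu) * shiftSubst c (Xu : MvPowerSeries (Fin 2) A) = Xu := by
  have h := congrArg (fun p => map (Int.castRingHom A) (uEmbed p))
    (one_add_smul_X_mul_shiftSeries c)
  simp only [map_mul, map_add, map_one, map_zsmul, uEmbed_X] at h
  rw [shiftSubst, Xu, substInt_X]
  simpa using h

end SpectralSubstitutions

lemma mul_lie_mul_eq_succ_nsmul {R : Type*} [Ring R] {W P Q q E F G : R} {n : ℕ}
    (hW : ∀ x, Commute W x) (hP : ∀ x, Commute P x)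
    (hQ : W * ⁅Q, E⁆ = n • (P * (Q * (F - E))))
    (hq : (W + n • P) * ⁅q, E⁆ = P * (q * (G - E)))
    (hqF : n • ⁅q, F⁆ = q * (G - F)) :
    W * ⁅Q * q, E⁆ = (n + 1) • (P * (Q * q * (F - E))) := by
  have hq' : W * ⁅q, E⁆ = P * (q * (G - E)) - n • (P * ⁅q, E⁆) := by
    rw [← hq, add_mul, smul_mul_assoc, add_sub_cancel_right]
  have hG : q * (G - E) = q * (F - E) + n • ⁅q, F⁆ := by
    rw [hqF]
    noncomm_ring
  calc W * ⁅Q * q, E⁆ = Q * (W * ⁅q, E⁆) + W * ⁅Q, E⁆ * q := by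
        rw [← (hW Q).left_comm]
        simp only [Ring.lie_def]
        noncomm_ring
    _ = (n + 1) • (P * (Q * q * (F - E))) := by
        rw [hq', hQ, hG]
        simp only [Ring.lie_def, mul_sub, sub_mul, mul_add, smul_sub, mul_smul_comm,
          smul_mul_assoc, mul_assoc, add_smul, one_smul, (hP Q).left_comm]
        abel

section Commutator

open MvPowerSeries

variable {A : Type*} [Ring A] {h e : ℕ → A}

lemma mul_lie_shiftCoeff_Vseries
    (hhe : (Xv - Xu) * ⁅Useries h, Vseries e⁆ = Xu * Xv * (Useries h * (Useries e - Vseries e)))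
    (c : ℤ) :
    (Xv - Xu + c • (Xu * Xv)) * ⁅Useries (shiftCoeff c h), Vseries e⁆ =
      Xu * Xv * (Useries (shiftCoeff c h) * (Useries (shiftCoeff c e) - Vseries e)) := by
  have hφ := one_add_smul_Xu_mul_shiftSubst_Xu (A := A) c
  have H := congrArg (fun F => (1 + c • Xu) * shiftSubst c F) hhe
  simp only [Ring.lie_def, map_mul, map_sub, shiftSubst_Useries, shiftSubst_Vseries,
    shiftSubst_Xv] at H
  have hW : (1 + c • Xu) * (Xv - shiftSubst c Xu) =
      (Xv - Xu + c • (Xu * Xv) : MvPowerSeries (Fin 2) A) := by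
    rw [mul_sub, hφ, add_mul, one_mul, smul_mul_assoc]
    abel
  rw [← hW, mul_assoc, Ring.lie_def, H, ← mul_assoc (1 + c • Xu), ← mul_assoc (1 + c • Xu), hφ]

lemma smul_lie_shiftCoeff_Useries
    (hhe : (Xv - Xu) * ⁅Useries h, Vseries e⁆ = Xu * Xv * (Useries h * (Useries e - Vseries e)))
    (c : ℤ) :
    c • ⁅Useries (shiftCoeff c h), Useries e⁆ =
      Useries (shiftCoeff c h) * (Useries (shiftCoeff c e) - Useries e) := by
  -- `v ↦ u` kills `Xv - Xu`, leaving a relation divisible by `Xu * Xu`.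
  have H := congrArg diagSubst (mul_lie_shiftCoeff_Vseries hhe c)
  simp only [Ring.lie_def, map_mul, map_sub, map_add, map_zsmul, diagSubst_Useries,
    diagSubst_Vseries, diagSubst_Xu, diagSubst_Xv, sub_self, zero_add] at H
  rw [smul_mul_assoc, ← mul_smul_comm, mul_assoc, mul_assoc, Xu] at H
  exact X_mul_left_cancel 0 (X_mul_left_cancel 0 H)

lemma hUp_succ (n : ℕ) : hUp h (n + 1) = hUp h n * Useries (shiftCoeff n h) := by
  simp [hUp, List.range_succ]

lemma mul_lie_hUp
    (hhe : (Xv - Xu) * ⁅Useries h, Vseries e⁆ = Xu * Xv * (Useries h * (Useries e - Vseries e)))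
    (n : ℕ) :
    (Xv - Xu) * ⁅hUp h n, Vseries e⁆ = n • (Xu * Xv * (hUp h n * (Useries e - Vseries e))) := by
  induction n with
  | zero => simp [hUp, Ring.lie_def]
  | succ n ih =>
    rw [hUp_succ]
    refine mul_lie_mul_eq_succ_nsmul (G := Useries (shiftCoeff n e)) (fun x => ?_) (fun x => ?_)
      ih ?_ ?_
    · exact ((commute_X x 1).sub_right (commute_X x 0)).symm
    · exact ((commute_X x 0).mul_right (commute_X x 1)).symm
    · simpa only [natCast_zsmul] using mul_lie_shiftCoeff_Vseries hhe n
    · simpa only [natCast_zsmul] using smul_lie_shiftCoeff_Useries hhe n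

end Commutator

theorem stmt14_general {A : Type*} [Ring A]
    (h e : ℕ → A)
    (hhe : (Xv - Xu) * ⁅Useries h, Vseries e⁆ =
      Xu * Xv * (Useries h * (Useries e - Vseries e)))
    (ℓ : ℕ) :
    (Xv - Xu) * ⁅hUp h ℓ, Vseries e⁆ =
      ℓ • (Xu * Xv * (hUp h ℓ * (Useries e - Vseries e))) :=
  mul_lie_hUp hhe ℓ

theorem stmt14 {k A : Type*} [Field k] [Ring A] [Algebra k A]
    (h e : ℕ → A) (hh0 : h 0 = 1) (he0 : e 0 = 0)
    (hhe : (Xv - Xu) * ⁅Useries h, Vseries e⁆ =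
      Xu * Xv * (Useries h * (Useries e - Vseries e)))
    (hex : Useries (shiftCoeff 1 e) * Useries h =
      (Useries h * Useries e : MvPowerSeries (Fin 2) A))
    (ℓ : ℕ) (hl : 1 ≤ ℓ) :
    (Xv - Xu) * ⁅hUp h ℓ, Vseries e⁆ =
      ℓ • (Xu * Xv * (hUp h ℓ * (Useries e - Vseries e))) :=
  stmt14_general h e hhe ℓ
end
end

section
/- Let A be an associative algebra over a field of characteristic p > 2 and suppose elements e^{(r)} (r ≥ 1) satisfy [e^{(r)}, e^{(s)}] = Σ_{t=r}^{s-1} e^{(t)} e^{(r+s-1-t)} for 1 ≤ r < s, and suppose all coefficients of the series e(u)^p are central in A. Then each element (e^{(r)})^p is central in A. -/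
/-!
Write `E = e(u)` as a power series in `X = u⁻¹` and put `a = -e⁽¹⁾X`. The case `r = 1` of the
relations says `[e⁽¹⁾, E] = E²`, i.e. `E a = a E + E² X` with `X` central. Normal ordering gives
`(E + a)ⁿ = Σ_{i+j=n} C(n,i) ∏_{l<j} (1 + lX) aⁱ Eʲ`, so in characteristic `p` only the extreme
terms survive: `(E + a)ᵖ = ∏_{l<p} (1 + lX) Eᵖ + aᵖ`. Now `E + a = X E'`, where `E'` is the series
of `e⁽²⁾, e⁽³⁾, …`, which satisfy the same relations, and `(e⁽¹⁾)ᵖ` is the `Xᵖ`-coefficient of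
`Eᵖ`; hence the coefficients of `E'ᵖ` are again central, and induction on `r` concludes.
-/

open Finset PowerSeries

section NormalOrdering

variable {R : Type*} [Semiring R]

def prodOneAddNatMul (x : R) : ℕ → R
  | 0 => 1
  | j + 1 => prodOneAddNatMul x j * (1 + (j : R) * x)

lemma prodOneAddNatMul_mem {S : Type*} [SetLike S R] [SubsemiringClass S R]
    {s : S} {x : R} (hx : x ∈ s) (j : ℕ) : prodOneAddNatMul x j ∈ s := by
  induction j with
  | zero => exact one_mem s
  | succ j ih => exact mul_mem ih (add_mem (one_mem s) (mul_mem (natCast_mem s j) hx))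

variable {x E a : R} (hx : ∀ t, Commute x t) (h : E * a = a * E + E ^ 2 * x)
include hx h

lemma pow_mul_of_mul_eq_add_sq_mul (j : ℕ) : E ^ j * a = a * E ^ j + E ^ (j + 1) * (j * x) := by
  induction j with
  | zero => simp
  | succ j ih =>
    have hjx : Commute ((j : R) * x) E := (Nat.cast_commute j E).mul_left (hx E)
    calc E ^ (j + 1) * a = (E ^ j * a) * E + E ^ j * E ^ 2 * x := by
          rw [pow_succ, mul_assoc, h, mul_add, ← mul_assoc, mul_assoc _ _ x]
      _ = a * E ^ (j + 1) + E ^ (j + 2) * (j * x) + E ^ (j + 2) * x := by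
          rw [ih, add_mul, mul_assoc (E ^ (j + 1)), hjx.eq, ← mul_assoc, mul_assoc a, ← pow_succ,
            ← pow_succ, ← pow_add]
      _ = a * E ^ (j + 1) + E ^ (j + 2) * ((j + 1 : ℕ) * x) := by
          rw [Nat.cast_succ, add_one_mul, mul_add, add_assoc]

lemma add_pow_of_mul_eq_add_sq_mul (n : ℕ) :
    (E + a) ^ n = ∑ ij ∈ antidiagonal n,
      (n.choose ij.1 : R) * (prodOneAddNatMul x ij.2 * (a ^ ij.1 * E ^ ij.2)) := by
  induction n with
  | zero => simp [prodOneAddNatMul]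
  | succ n ih =>
    have hterm (i j : ℕ) : a ^ i * E ^ j * (E + a) =
        a ^ i * E ^ (j + 1) + (j : R) * x * (a ^ i * E ^ (j + 1)) + a ^ (i + 1) * E ^ j := by
      rw [mul_add, mul_assoc (a ^ i) (E ^ j) a, pow_mul_of_mul_eq_add_sq_mul hx h, add_assoc,
        mul_assoc, ← pow_succ, ((Nat.cast_commute j _).mul_left (hx _)).eq, mul_add,
        add_comm (a ^ i * (a * E ^ j)), pow_succ a i]
      simp only [mul_assoc]
    rw [pow_succ, ih, sum_mul,
      sum_antidiagonal_choose_succ_mul (fun i j => prodOneAddNatMul x j * (a ^ i * E ^ j)) n,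
      ← sum_add_distrib]
    refine sum_congr rfl fun ⟨i, j⟩ hij => ?_
    rw [Nat.choose_symm_of_eq_add (mem_antidiagonal.mp hij).symm, mul_assoc, mul_assoc, hterm,
      prodOneAddNatMul]
    simp only [mul_add, add_mul, one_mul, mul_assoc]

lemma add_pow_char_of_mul_eq_add_sq_mul {p : ℕ} (hp : p.Prime) (hpR : (p : R) = 0) :
    (E + a) ^ p = prodOneAddNatMul x p * E ^ p + a ^ p := by
  have hmid : ∀ ij ∈ antidiagonal p, ij ≠ (0, p) ∧ ij ≠ (p, 0) →
      (p.choose ij.1 : R) * (prodOneAddNatMul x ij.2 * (a ^ ij.1 * E ^ ij.2)) = 0 := by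
    rintro ⟨i, j⟩ hij ⟨hi, hj⟩
    replace hij : i + j = p := mem_antidiagonal.mp hij
    have hi0 : i ≠ 0 := by rintro rfl; simp_all
    have hj0 : j ≠ 0 := by rintro rfl; simp_all
    obtain ⟨c, hc⟩ := hp.dvd_choose_self hi0 (by omega)
    rw [hc, Nat.cast_mul, hpR, zero_mul, zero_mul]
  rw [add_pow_of_mul_eq_add_sq_mul hx h, sum_eq_add_of_mem (0, p) (p, 0) (by simp) (by simp)
    (by simp [hp.ne_zero]) hmid]
  simp [prodOneAddNatMul]

end NormalOrdering

def dropFirst {M : Type*} [Zero M] (f : ℕ → M) : ℕ → M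
  | 0 => 0
  | n + 1 => f (n + 2)

lemma dropFirst_of_ne_zero {M : Type*} [Zero M] (f : ℕ → M) {n : ℕ} (hn : n ≠ 0) :
    dropFirst f n = f (n + 1) := by
  obtain ⟨m, rfl⟩ := Nat.exists_eq_succ_of_ne_zero hn
  rfl

def YangianRel {A : Type*} [Ring A] (e : ℕ → A) : Prop :=
  ∀ r s : ℕ, 1 ≤ r → r < s → ⁅e r, e s⁆ = ∑ t ∈ Ico r s, e t * e (r + s - 1 - t)

lemma YangianRel.dropFirst {A : Type*} [Ring A] {f : ℕ → A} (hf : YangianRel f) :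
    YangianRel (dropFirst f) := by
  intro r s hr hrs
  rw [dropFirst_of_ne_zero f (by omega), dropFirst_of_ne_zero f (by omega),
    hf (r + 1) (s + 1) (by omega) (by omega), ← sum_Ico_add']
  refine sum_congr rfl fun t ht => ?_
  rw [mem_Ico] at ht
  rw [dropFirst_of_ne_zero f (by omega), dropFirst_of_ne_zero f (by omega)]
  congr 2
  omega

namespace PowerSeries

lemma mem_centralizer_range_C_iff {A : Type*} [Semiring A] {φ : A⟦X⟧} :
    φ ∈ Set.centralizer (Set.range (C : A →+* A⟦X⟧)) ↔ ∀ n, coeff n φ ∈ Set.center A := by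
  simp only [Set.mem_centralizer_iff, Set.forall_mem_range, Semigroup.mem_center_iff,
    PowerSeries.ext_iff, coeff_C_mul, coeff_mul_C]
  exact forall_comm

variable {A : Type*} [Ring A] {f : ℕ → A}

lemma X_mul_mk_dropFirst (hf0 : f 0 = 0) : X * mk (dropFirst f) = mk f - C (f 1) * X := by
  ext (_ | _ | n) <;> simp [dropFirst, hf0]

lemma coeff_mk_pow_self (hf0 : f 0 = 0) (n : ℕ) : coeff n (mk f ^ n) = f 1 ^ n := by
  have hX : mk f = X * (C (f 1) + mk (dropFirst f)) := by
    rw [mul_add, X_mul_mk_dropFirst hf0, ← (commute_X _).eq, add_sub_cancel]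
  rw [hX, (commute_X _).symm.mul_pow, coeff_X_pow_mul']
  simp [dropFirst]

lemma lie_C_mk_eq_sq (hf0 : f 0 = 0) (hf : YangianRel f) : ⁅C (f 1), mk f⁆ = mk f ^ 2 := by
  ext n
  rw [Ring.lie_def, map_sub, coeff_C_mul, coeff_mul_C, coeff_mk, sq, coeff_mul,
    Nat.sum_antidiagonal_eq_sum_range_succ_mk]
  simp only [coeff_mk]
  rcases lt_or_ge n 2 with hn | hn
  · interval_cases n <;> simp [sum_range_succ, hf0]
  · rw [← Ring.lie_def, hf 1 n le_rfl hn, range_eq_Ico, sum_Ico_succ_top (Nat.zero_le n),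
      sum_eq_sum_Ico_succ_bot (show 0 < n by omega), hf0, Nat.sub_self, hf0,
      zero_mul, mul_zero, zero_add, add_zero]
    refine sum_congr rfl fun t _ => ?_
    rw [Nat.add_sub_cancel_left]

lemma mk_dropFirst_pow_mem_centralizer {p : ℕ} (hp : p.Prime) (hpA : (p : A) = 0)
    (hf0 : f 0 = 0) (hf : YangianRel f)
    (hc : mk f ^ p ∈ Subring.centralizer (Set.range (C : A →+* A⟦X⟧))) :
    mk (dropFirst f) ^ p ∈ Subring.centralizer (Set.range (C : A →+* A⟦X⟧)) := by
  set S := Subring.centralizer (Set.range (C : A →+* A⟦X⟧))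
  have hX : X ∈ S := Subring.mem_centralizer_iff.2 fun g _ => (commute_X g).eq
  have hC {c : A} (hc : c ∈ Set.center A) : C c ∈ S := by
    refine mem_centralizer_range_C_iff.2 fun n => ?_
    rw [coeff_C]
    split_ifs
    exacts [hc, Set.zero_mem_center]
  have hrel : mk f * -(C (f 1) * X) = -(C (f 1) * X) * mk f + mk f ^ 2 * X := by
    have hlie := lie_C_mk_eq_sq hf0 hf
    rw [Ring.lie_def] at hlie
    calc mk f * -(C (f 1) * X) = -((mk f * C (f 1)) * X) := by rw [mul_neg, mul_assoc]
      _ = -((C (f 1) * mk f - mk f ^ 2) * X) := by rw [← hlie, sub_sub_cancel]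
      _ = _ := by
        rw [sub_mul, neg_sub, mul_assoc (C _), (commute_X (mk f)).eq, ← mul_assoc, neg_mul,
          sub_eq_neg_add]
  have hpow : X ^ p * mk (dropFirst f) ^ p =
      prodOneAddNatMul X p * mk f ^ p + (-(C (f 1) * X)) ^ p := by
    rw [← (commute_X _).symm.mul_pow, X_mul_mk_dropFirst hf0, sub_eq_add_neg,
      add_pow_char_of_mul_eq_add_sq_mul (fun t => (commute_X t).symm) hrel hp
        (by rw [← map_natCast C, hpA, map_zero])]
  have hb : (-(C (f 1) * X)) ^ p ∈ S := by
    rw [neg_pow, (commute_X _).mul_pow, ← map_pow]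
    refine mul_mem (pow_mem (neg_mem (one_mem S)) p) (mul_mem (hC ?_) (pow_mem hX p))
    rw [← coeff_mk_pow_self hf0]
    exact mem_centralizer_range_C_iff.1 hc p
  have hXpow : X ^ p * mk (dropFirst f) ^ p ∈ S :=
    hpow ▸ add_mem (mul_mem (prodOneAddNatMul_mem hX p) hc) hb
  refine mem_centralizer_range_C_iff.2 fun n => ?_
  simpa using mem_centralizer_range_C_iff.1 hXpow (n + p)

end PowerSeries

theorem pow_succ_mem_center_of_yangianRel {p : ℕ} (hp : p.Prime) {A : Type*} [Ring A]
    (hpA : (p : A) = 0)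
    (r : ℕ) (f : ℕ → A) (hf0 : f 0 = 0) (hf : YangianRel f)
    (hc : mk f ^ p ∈ Subring.centralizer (Set.range (C : A →+* A⟦X⟧))) :
    f (r + 1) ^ p ∈ Set.center A := by
  induction r generalizing f with
  | zero =>
    rw [← coeff_mk_pow_self hf0]
    exact mem_centralizer_range_C_iff.1 hc p
  | succ r ih =>
    exact ih (dropFirst f) rfl hf.dropFirst (mk_dropFirst_pow_mem_centralizer hp hpA hf0 hf hc)

theorem stmt16_general {k A : Type*} [Field k] [Ring A] [Algebra k A]
    (p : ℕ) [Fact p.Prime] [CharP k p]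
    (e : ℕ → A) (he0 : e 0 = 0)
    (hee : ∀ r s : ℕ, 1 ≤ r → r < s →
      ⁅e r, e s⁆ = ∑ t ∈ Finset.Ico r s, e t * e (r + s - 1 - t))
    (hcent : ∀ n : ℕ, (PowerSeries.coeff n) ((PowerSeries.mk e) ^ p) ∈ Set.center A) :
    ∀ r : ℕ, (e r) ^ p ∈ Set.center A := by
  have hpA : (p : A) = 0 := by
    rw [← map_natCast (algebraMap k A), CharP.cast_eq_zero, map_zero]
  rintro (_ | r)
  · rw [he0, zero_pow (Fact.out : p.Prime).ne_zero]
    exact Set.zero_mem_center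
  · exact pow_succ_mem_center_of_yangianRel Fact.out hpA r e he0 hee
      (PowerSeries.mem_centralizer_range_C_iff.2 hcent)

theorem stmt16 {k A : Type*} [Field k] [Ring A] [Algebra k A]
    (p : ℕ) [Fact p.Prime] [CharP k p] (hp : 2 < p)
    (e : ℕ → A) (he0 : e 0 = 0)
    (hee : ∀ r s : ℕ, 1 ≤ r → r < s →
      ⁅e r, e s⁆ = ∑ t ∈ Finset.Ico r s, e t * e (r + s - 1 - t))
    (hcent : ∀ n : ℕ, (PowerSeries.coeff n) ((PowerSeries.mk e) ^ p) ∈ Set.center A) :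
    ∀ r : ℕ, (e r) ^ p ∈ Set.center A :=
  stmt16_general (k := k) p e he0 hee hcent
end

section
/- Let Z be a commutative ring and z_1, z_2, … elements of a commutative Z-algebra such that the monomials in the z_i are Z-linearly independent (the z_i are algebraically independent over Z). If c(u) = 1 + Σ_{r≥1} c^{(r)} u^{-r} is a series whose coefficients c^{(r)} are polynomials in the z_i with the property that the degree-filtration symbols of c^{(rp)} equal z_r^p - z_{rp-p+1} (for all r ≥ 1, in a graded polynomial ring k[z_1, z_2, …] with deg z_r = r-1 over a field of characteristic p), then the elements {c^{(rp)} : r ≥ 1} are algebraically independent over k. -/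
/-!
If each `c i` equals a `w`-homogeneous `t i` of degree `v i` up to terms of lower weight, then
for a nonzero relation `P` the top `w`-component of `P(c)` is `P_d(t)`, where `P_d` is the top
`v`-component of `P`; so algebraic independence of the symbols `t` forces `P_d = 0`, which is
absurd. Apply this twice: the symbols `z_r^p - z_{rp-p+1}` (for `deg z_m = m - 1`) have in turn
the symbols `z_r^p` for `deg z_m = m`, since `rp - p + 1 < rp`, and the `z_r^p` are algebraically
independent because the substitution `z_m ↦ z_m^p` is injective.
-/

open MvPolynomial Finsupp

namespace MvPolynomial

variable {σ R : Type*} [CommRing R] {w : σ → ℕ}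

theorem weightedTotalDegree'_lt_iff {f : MvPolynomial σ R} {n : ℕ} :
    weightedTotalDegree' w f < n ↔ ∀ d ∈ f.support, weight w d < n := by
  simp [weightedTotalDegree', Nat.cast_withBot, WithBot.coe_lt_coe]

theorem weightedTotalDegree'_lt_iff_eq_zero_or_lt {f : MvPolynomial σ R} {n : ℕ} :
    weightedTotalDegree' w f < n ↔ f = 0 ∨ weightedTotalDegree w f < n := by
  by_cases hf : f = 0
  · simp [hf, weightedTotalDegree'_zero]
  · simp [hf, weightedTotalDegree_coe w f hf, Nat.cast_withBot, WithBot.coe_lt_coe]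

theorem weightedTotalDegree'_add_lt {f g : MvPolynomial σ R} {n : ℕ}
    (hf : weightedTotalDegree' w f < n) (hg : weightedTotalDegree' w g < n) :
    weightedTotalDegree' w (f + g) < n := by
  classical
  rw [weightedTotalDegree'_lt_iff] at hf hg ⊢
  intro d hd
  rcases Finset.mem_union.mp (support_add hd) with hd | hd
  exacts [hf d hd, hg d hd]

theorem weightedTotalDegree'_mul_lt {f g : MvPolynomial σ R} {m n : ℕ}
    (hf : weightedTotalDegree' w f < m) (hg : weightedTotalDegree w g ≤ n) :
    weightedTotalDegree' w (f * g) < (m + n : ℕ) := by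
  classical
  rw [weightedTotalDegree'_lt_iff] at hf ⊢
  intro d hd
  obtain ⟨a, ha, b, hb, rfl⟩ := Finset.mem_add.mp (support_mul f g hd)
  rw [map_add]
  exact add_lt_add_of_lt_of_le (hf a ha) ((le_weightedTotalDegree w hb).trans hg)

theorem weightedHomogeneousComponent_weightedTotalDegree_ne_zero {f : MvPolynomial σ R}
    (hf : f ≠ 0) : weightedHomogeneousComponent w (weightedTotalDegree w f) f ≠ 0 := by
  classical
  obtain ⟨a, ha, hsup⟩ :=
    Finset.exists_mem_eq_sup f.support (support_nonempty.mpr hf) (weight w)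
  have hmax : weight w a = weightedTotalDegree w f := hsup.symm
  intro h0
  have := congrArg (coeff a) h0
  rw [coeff_weightedHomogeneousComponent, if_pos hmax, coeff_zero] at this
  exact mem_support_iff.mp ha this

variable (w) in
/-- `h` is the symbol of `f` in degree `n` of the `w`-weighted degree filtration. -/
def IsLeadingForm (n : ℕ) (f h : MvPolynomial σ R) : Prop :=
  IsWeightedHomogeneous w h n ∧ weightedTotalDegree' w (f - h) < n

theorem IsWeightedHomogeneous.isLeadingForm {h : MvPolynomial σ R} {n : ℕ}
    (hh : IsWeightedHomogeneous w h n) : IsLeadingForm w n h h :=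
  ⟨hh, by simp [weightedTotalDegree'_zero]⟩

theorem isLeadingForm_add {h q : MvPolynomial σ R} {n : ℕ} (hh : IsWeightedHomogeneous w h n)
    (hq : weightedTotalDegree' w q < n) : IsLeadingForm w n (h + q) h :=
  ⟨hh, by rwa [add_sub_cancel_left]⟩

namespace IsLeadingForm

variable {f g h h' : MvPolynomial σ R} {m n : ℕ}

theorem weightedTotalDegree_le (hf : IsLeadingForm w n f h) : weightedTotalDegree w f ≤ n := by
  classical
  refine Finset.sup_le fun d hd => ?_
  rw [← add_sub_cancel h f] at hd
  rcases Finset.mem_union.mp (support_add hd) with hd | hd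
  · exact (hf.1 (mem_support_iff.mp hd)).le
  · exact (weightedTotalDegree'_lt_iff.mp hf.2 d hd).le

theorem weightedHomogeneousComponent_of_le (hf : IsLeadingForm w n f h) (hm : n ≤ m) :
    weightedHomogeneousComponent w m f = if m = n then h else 0 := by
  have hlow : weightedHomogeneousComponent w m (f - h) = 0 :=
    weightedHomogeneousComponent_eq_zero' _ _ fun d hd =>
      (weightedTotalDegree'_lt_iff.mp hf.2 d hd).trans_le hm |>.ne
  rw [← add_sub_cancel h f, map_add, hlow, add_zero]
  split_ifs with hmn
  · exact hmn ▸ hf.1.weightedHomogeneousComponent_same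
  · exact hf.1.weightedHomogeneousComponent_ne m hmn

theorem mul (hf : IsLeadingForm w m f h) (hg : IsLeadingForm w n g h') :
    IsLeadingForm w (m + n) (f * g) (h * h') := by
  refine ⟨hf.1.mul hg.1, ?_⟩
  rw [show f * g - h * h' = (f - h) * g + (g - h') * h by ring]
  refine weightedTotalDegree'_add_lt
    (weightedTotalDegree'_mul_lt hf.2 hg.weightedTotalDegree_le) ?_
  rw [add_comm m]
  exact weightedTotalDegree'_mul_lt hg.2 hf.1.isLeadingForm.weightedTotalDegree_le

theorem pow (hf : IsLeadingForm w n f h) (e : ℕ) : IsLeadingForm w (e * n) (f ^ e) (h ^ e) := by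
  induction e with
  | zero => simpa using (isWeightedHomogeneous_one R w).isLeadingForm
  | succ e ih => simpa only [pow_succ, Nat.succ_mul] using ih.mul hf

theorem prod {ι : Type*} (s : Finset ι) {f h : ι → MvPolynomial σ R} {n : ι → ℕ}
    (hf : ∀ i ∈ s, IsLeadingForm w (n i) (f i) (h i)) :
    IsLeadingForm w (∑ i ∈ s, n i) (∏ i ∈ s, f i) (∏ i ∈ s, h i) := by
  classical
  induction s using Finset.induction with
  | empty => simpa using (isWeightedHomogeneous_one R w).isLeadingForm
  | insert i s hi ih =>
    rw [Finset.prod_insert hi, Finset.prod_insert hi, Finset.sum_insert hi]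
    exact (hf i (Finset.mem_insert_self i s)).mul
      (ih fun j hj => hf j (Finset.mem_insert_of_mem hj))

end IsLeadingForm

variable {ι : Type*} {v : ι → ℕ} {c t : ι → MvPolynomial σ R}

theorem isLeadingForm_aeval_monomial (hc : ∀ i, IsLeadingForm w (v i) (c i) (t i))
    (a : ι →₀ ℕ) (b : R) :
    IsLeadingForm w (weight v a) (aeval c (monomial a b)) (aeval t (monomial a b)) := by
  have := ((isWeightedHomogeneous_C w b).isLeadingForm).mul
    (IsLeadingForm.prod a.support fun i _ => (hc i).pow (a i))
  rw [aeval_monomial, aeval_monomial]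
  simpa [weight_apply, Finsupp.prod, Finsupp.sum, algebraMap_eq, smul_eq_mul] using this

theorem weightedHomogeneousComponent_aeval (hc : ∀ i, IsLeadingForm w (v i) (c i) (t i))
    {P : MvPolynomial ι R} {d : ℕ} (hP : weightedTotalDegree v P ≤ d) :
    weightedHomogeneousComponent w d (aeval c P) =
      aeval t (weightedHomogeneousComponent v d P) := by
  classical
  conv_lhs => rw [← P.support_sum_monomial_coeff]
  rw [map_sum, map_sum, weightedHomogeneousComponent_apply, map_sum, Finset.sum_filter]
  refine Finset.sum_congr rfl fun a ha => ?_
  rw [(isLeadingForm_aeval_monomial hc a _).weightedHomogeneousComponent_of_le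
    ((le_weightedTotalDegree v ha).trans hP)]
  simp only [eq_comm]

theorem _root_.AlgebraicIndependent.of_isLeadingForm (ht : AlgebraicIndependent R t)
    (hc : ∀ i, IsLeadingForm w (v i) (c i) (t i)) : AlgebraicIndependent R c := by
  rw [algebraicIndependent_iff] at ht ⊢
  intro P hP
  by_contra hP0
  refine weightedHomogeneousComponent_weightedTotalDegree_ne_zero (w := v) hP0 (ht _ ?_)
  rw [← weightedHomogeneousComponent_aeval hc le_rfl, hP, map_zero]

theorem algebraicIndependent_X_pow {p : ℕ} (hp : 0 < p) :
    AlgebraicIndependent R (fun i : σ => (X i : MvPolynomial σ R) ^ p) :=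
  expand_injective hp

theorem isLeadingForm_X_pow_sub_X [Nontrivial R] {p : ℕ} {i j : σ} (hj : w j < p * w i) :
    IsLeadingForm w (p * w i) (X i ^ p - X j : MvPolynomial σ R) (X i ^ p) := by
  rw [sub_eq_add_neg]
  refine isLeadingForm_add ((isWeightedHomogeneous_X R w i).pow p) ?_
  rw [weightedTotalDegree'_lt_iff, support_neg, support_X]
  simpa [weight_single] using hj

theorem isWeightedHomogeneous_X_pow_sub_X {p n : ℕ} {i j : σ} (hi : p * w i = n) (hj : w j = n) :
    IsWeightedHomogeneous w (X i ^ p - X j : MvPolynomial σ R) n := by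
  refine IsWeightedHomogeneous.sub ?_ ?_
  · simpa [hi] using (isWeightedHomogeneous_X R w i).pow p
  · simpa [hj] using isWeightedHomogeneous_X R w j

end MvPolynomial

open MvPolynomial

theorem stmt19_general {k : Type*} [Field k] (p : ℕ) [Fact p.Prime]
    (c : ℕ+ → MvPolynomial ℕ+ k)
    (hc : ∀ r : ℕ+, ∃ q : MvPolynomial ℕ+ k,
      c r = MvPolynomial.X r ^ p
          - MvPolynomial.X (⟨(r : ℕ) * p - p + 1, Nat.succ_pos _⟩ : ℕ+) + q ∧
        (q = 0 ∨
          MvPolynomial.weightedTotalDegree (fun m : ℕ+ => (m : ℕ) - 1) q <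
            (r : ℕ) * p - p)) :
    AlgebraicIndependent k c := by
  have hp : 1 < p := (Fact.out : p.Prime).one_lt
  have hsymbol : AlgebraicIndependent k fun r : ℕ+ =>
      (X r ^ p - X (⟨(r : ℕ) * p - p + 1, Nat.succ_pos _⟩ : ℕ+) : MvPolynomial ℕ+ k) :=
    (algebraicIndependent_X_pow (by omega)).of_isLeadingForm fun r =>
      isLeadingForm_X_pow_sub_X (w := fun m : ℕ+ => (m : ℕ)) <| by
        have := Nat.le_mul_of_pos_left p r.pos
        simp only [PNat.mk_coe, mul_comm p]
        omega
  refine hsymbol.of_isLeadingForm (w := fun m : ℕ+ => (m : ℕ) - 1)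
    (v := fun r : ℕ+ => (r : ℕ) * p - p) fun r => ?_
  obtain ⟨q, hcq, hq⟩ := hc r
  rw [hcq]
  exact isLeadingForm_add
    (isWeightedHomogeneous_X_pow_sub_X (by simp [Nat.mul_sub_one, mul_comm]) rfl)
    (weightedTotalDegree'_lt_iff_eq_zero_or_lt.mpr hq)

theorem stmt19 {k : Type*} [Field k] (p : ℕ) [Fact p.Prime] [CharP k p]
    (hp : 2 < p) (c : ℕ+ → MvPolynomial ℕ+ k)
    (hc : ∀ r : ℕ+, ∃ q : MvPolynomial ℕ+ k,
      c r = MvPolynomial.X r ^ p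
          - MvPolynomial.X (⟨(r : ℕ) * p - p + 1, Nat.succ_pos _⟩ : ℕ+) + q ∧
        (q = 0 ∨
          MvPolynomial.weightedTotalDegree (fun m : ℕ+ => (m : ℕ) - 1) q <
            (r : ℕ) * p - p)) :
    AlgebraicIndependent k c :=
  stmt19_general p c hc
end
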